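/- Let A be a pervasive proper uniform algebra on a compact Hausdorff space X. If φ is a character of A that is represented by a regular Borel probability measure λ on X such that λ({x}) = 0 for every x ∈ X with evaluation-at-x equal to φ (equivalently, λ has no point mass at a point representing φ), and there exists b ∈ supp λ and f ∈ A with φ(f) = 0, f(b) = 1, then supp λ = X. -/

import Mathlib

open MeasureTheory

variable {X : Type} [TopologicalSpace X] [CompactSpace X] [T2Space X]
  [MeasurableSpace X] [BorelSpace X]

/-- A uniform algebra `A` on `X` is pervasive if for every nonempty proper closed subset
`F` of `X`, the restrictions of elements of `A` to `F` are dense in `C(F, ℂ)`. -/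
def Pervasive (A : Subalgebra ℂ C(X, ℂ)) : Prop :=
  ∀ F : Set X, IsClosed F → F.Nonempty → F ≠ Set.univ →
    Dense ((fun f : C(X, ℂ) => f.restrict F) '' (A : Set C(X, ℂ)))

/-- The closed support of a measure. -/
def msupp (μ : Measure X) : Set X :=
  {x : X | ∀ U : Set X, IsOpen U → x ∈ U → μ U ≠ 0}

/-! If `F = msupp lam` were a proper subset of `X`, then, since `lam` is carried by `F` and
`A` is dense in `C(F)`, the relations `∫ f g dlam = φ (f g) = 0` for `g ∈ A` extend to
`g = conj f` on `F`. Hence `∫ |f|² dlam = 0`, so `f` vanishes `lam`-almost everywhere, which is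
impossible for a continuous function with `f b = 1` at a point `b` of the support. -/

lemma msupp_eq_support {Y : Type} [TopologicalSpace Y] [MeasurableSpace Y] (μ : Measure Y) :
    msupp μ = μ.support := by
  ext x
  simp [msupp, Measure.support_eq_forall_isOpen, pos_iff_ne_zero, imp.swap]

lemma isClosed_msupp {Y : Type} [TopologicalSpace Y] [MeasurableSpace Y] (μ : Measure Y) :
    IsClosed (msupp μ) :=
  msupp_eq_support μ ▸ Measure.isClosed_support

lemma ae_mem_msupp {Y : Type} [TopologicalSpace Y] [MeasurableSpace Y] (μ : Measure Y)
    [μ.Regular] : ∀ᵐ x ∂μ, x ∈ msupp μ :=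
  msupp_eq_support μ ▸ Measure.support_mem_ae_of_regular

lemma apply_eq_zero_of_mem_msupp {Y : Type} {E : Type*} [TopologicalSpace Y] [MeasurableSpace Y]
    [TopologicalSpace E] [Zero E] [T1Space E] {μ : Measure Y} {u : C(Y, E)} (hu : u =ᵐ[μ] 0)
    {x : Y} (hx : x ∈ msupp μ) : u x = 0 := by
  by_contra hux
  exact hx {y | u y ≠ 0} (isOpen_compl_singleton.preimage u.continuous) hux (ae_iff.mp hu)

section

variable {Y : Type*} [TopologicalSpace Y] [MeasurableSpace Y] {μ : Measure Y} [IsFiniteMeasure μ]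
  {F : Set Y} [CompactSpace F]

lemma norm_integral_le_norm_restrict_mul (hF : ∀ᵐ x ∂μ, x ∈ F) (u : C(Y, ℂ)) :
    ‖∫ x, u x ∂μ‖ ≤ ‖u.restrict F‖ * μ.real Set.univ :=
  norm_integral_le_of_norm_le_const <|
    hF.mono fun x hx => (u.restrict F).norm_coe_le_norm ⟨x, hx⟩

variable [CompactSpace Y] [OpensMeasurableSpace Y]

lemma integral_mul_star_self_eq_zero (hF : ∀ᵐ x ∂μ, x ∈ F) {S : Set C(Y, ℂ)}
    (hS : Dense ((fun g : C(Y, ℂ) => g.restrict F) '' S)) {h : C(Y, ℂ)}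
    (hh : ∀ g ∈ S, ∫ x, h x * g x ∂μ = 0) : ∫ x, (h * star h) x ∂μ = 0 := by
  have integrable (u : C(Y, ℂ)) : Integrable u μ :=
    u.continuous.integrable_of_hasCompactSupport (HasCompactSupport.of_compactSpace _)
  set C := ‖h.restrict F‖ * μ.real Set.univ
  have hbound : ∀ g ∈ S,
      ‖∫ x, (h * star h) x ∂μ‖ ≤ C * dist (g.restrict F) ((star h).restrict F) := by
    intro g hg
    have hsplit : ∫ x, (h * star h) x ∂μ = ∫ x, (h * (star h - g)) x ∂μ := by
      simp only [mul_sub, ContinuousMap.sub_apply]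
      rw [integral_sub (integrable _) (integrable (h * g))]
      simp [hh g hg]
    rw [hsplit, dist_comm, dist_eq_norm, mul_right_comm]
    refine (norm_integral_le_norm_restrict_mul hF _).trans ?_
    gcongr
    exact norm_mul_le (h.restrict F) ((star h - g).restrict F)
  refine norm_le_zero_iff.mp <| le_of_forall_pos_le_add fun ε hε => ?_
  obtain ⟨_, hball, g, hg, rfl⟩ :=
    Metric.dense_iff.mp hS ((star h).restrict F) (ε / (C + 1)) (by positivity)
  calc ‖∫ x, (h * star h) x ∂μ‖ ≤ C * (ε / (C + 1)) :=
        (hbound g hg).trans (by gcongr; exact (Metric.mem_ball.mp hball).le)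
    _ ≤ 0 + ε := by
        rw [zero_add, mul_div_assoc', div_le_iff₀ (by positivity)]
        nlinarith

lemma ae_eq_zero_of_integral_mul_star_self_eq_zero {u : C(Y, ℂ)}
    (hu : ∫ x, (u * star u) x ∂μ = 0) : u =ᵐ[μ] 0 := by
  have hnormSq : ∫ x, ‖u x‖ ^ 2 ∂μ = 0 := by
    simp only [ContinuousMap.mul_apply, ContinuousMap.star_apply, Complex.star_def,
      Complex.mul_conj', ← Complex.ofReal_pow, integral_complex_ofReal] at hu
    exact_mod_cast hu
  have hint : Integrable (fun x => ‖u x‖ ^ 2) μ :=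
    (by fun_prop : Continuous fun x => ‖u x‖ ^ 2).integrable_of_hasCompactSupport
      (HasCompactSupport.of_compactSpace _)
  filter_upwards [(integral_eq_zero_iff_of_nonneg (fun x => by positivity) hint).mp hnormSq]
    with x hx
  simpa using hx

end

theorem stmt_6_general (A : Subalgebra ℂ C(X, ℂ))
    (hperv : Pervasive A)
    (φ : A →ₐ[ℂ] ℂ)
    (lam : Measure X) [IsProbabilityMeasure lam] (hreg : lam.Regular)
    (hrep : ∀ f : A, φ f = ∫ x, (f : C(X, ℂ)) x ∂lam)
    (b : X) (hb : b ∈ msupp lam)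
    (f : A) (hφf : φ f = 0) (hfb : (f : C(X, ℂ)) b = 1) :
    msupp lam = Set.univ := by
  by_contra hne
  have := hreg
  have : CompactSpace (msupp lam) := isCompact_iff_compactSpace.mp (isClosed_msupp lam).isCompact
  have hdense := hperv _ (isClosed_msupp lam) ⟨b, hb⟩ hne
  have horth : ∀ g ∈ A, ∫ x, (f : C(X, ℂ)) x * g x ∂lam = 0 := fun g hg => by
    simpa [hφf] using (hrep (f * ⟨g, hg⟩)).symm
  have hf0 : (f : C(X, ℂ)) =ᵐ[lam] 0 :=
    ae_eq_zero_of_integral_mul_star_self_eq_zero <|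
      integral_mul_star_self_eq_zero (ae_mem_msupp lam) hdense horth
  simpa [hfb] using apply_eq_zero_of_mem_msupp hf0 hb

/-- For a proper pervasive algebra, a representing measure with no point mass at a point
representing `φ` (and witnessing nondensity of `A` on its support) has full support. -/
theorem stmt_6 (A : Subalgebra ℂ C(X, ℂ))
    (hclosed : IsClosed (A : Set C(X, ℂ)))
    (hsep : ∀ x y : X, x ≠ y → ∃ f ∈ A, f x ≠ f y)
    (hperv : Pervasive A) (hproper : A ≠ ⊤)
    (φ : A →ₐ[ℂ] ℂ)
    (lam : Measure X) [IsProbabilityMeasure lam] (hreg : lam.Regular)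
    (hrep : ∀ f : A, φ f = ∫ x, (f : C(X, ℂ)) x ∂lam)
    (hnopm : ∀ x : X, (∀ f : A, (f : C(X, ℂ)) x = φ f) → lam {x} = 0)
    (b : X) (hb : b ∈ msupp lam)
    (f : A) (hφf : φ f = 0) (hfb : (f : C(X, ℂ)) b = 1) :
    msupp lam = Set.univ :=
  stmt_6_general A hperv φ lam hreg hrep b hb f hφf hfb
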